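/- For every real x > 0, x^8 + 9x^6 + 28x^4 + 36x^2 + 16 > √(x^2+4)·(x^7 + 7x^5 + 16x^3 + 14x). -/
import Mathlib


theorem sqrt_ineq_8 (x : ℝ) (hx : x > 0) :
    x^8 + 9*x^6 + 28*x^4 + 36*x^2 + 16
      > Real.sqrt (x^2 + 4) * (x^7 + 7*x^5 + 16*x^3 + 14*x) := by
  set s := Real.sqrt (x^2 + 4) with hs
  have hs0 : 0 ≤ s := Real.sqrt_nonneg _
  have hs2 : s^2 = x^2 + 4 := Real.sq_sqrt (by positivity)
  have hL : (0:ℝ) ≤ x^8 + 9*x^6 + 28*x^4 + 36*x^2 + 16 := by positivity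
  have key : (s * (x^7 + 7*x^5 + 16*x^3 + 14*x))^2
      < (x^8 + 9*x^6 + 28*x^4 + 36*x^2 + 16)^2 := by
    have : (s * (x^7 + 7*x^5 + 16*x^3 + 14*x))^2
        = (x^2+4) * (x^7 + 7*x^5 + 16*x^3 + 14*x)^2 := by
      rw [mul_pow, hs2]
    rw [this]
    nlinarith [sq_nonneg x, sq_nonneg (x^2-1), sq_nonneg (x^2-2), sq_nonneg (x^4-2),
      sq_nonneg (x^3-x), sq_nonneg (x^3-2*x), pow_pos hx 2, pow_pos hx 4, pow_pos hx 6]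
  exact lt_of_pow_lt_pow_left₀ 2 hL key
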